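/- Let Q = ℚ[h₁,h₂]/(h₁³, h₂³) and let σ be the ℚ-algebra automorphism of Q induced by exchanging h₁ and h₂. Let P = ℚ[a,b]/(a³ − 3ab, a²b − 2b², ab², b³). Then the assignment a ↦ h₁ + h₂, b ↦ h₁h₂ induces a well-defined ℚ-algebra homomorphism φ : P → Q, φ is injective, and the image of φ is exactly the subalgebra of elements of Q fixed by σ. -/

import Mathlib

open MvPolynomial

set_option synthInstance.maxHeartbeats 1000000
set_option maxHeartbeats 1000000

noncomputable section

/-- The polynomial ring ℚ[h₁,h₂] (variables indexed by `Fin 2`). -/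
abbrev PolyQQ : Type := MvPolynomial (Fin 2) ℚ

/-- The ideal (h₁³, h₂³). -/
def symIdealQ : Ideal PolyQQ := Ideal.span {X 0 ^ 3, X 1 ^ 3}

/-- The ideal (a³ − 3ab, a²b − 2b², ab², b³), with a = X 0, b = X 1. -/
def symIdealP : Ideal PolyQQ :=
  Ideal.span {X 0 ^ 3 - 3 * (X 0 * X 1), X 0 ^ 2 * X 1 - 2 * X 1 ^ 2,
    X 0 * X 1 ^ 2, X 1 ^ 3}

/-- Q = ℚ[h₁,h₂]/(h₁³, h₂³). -/
abbrev QRing := PolyQQ ⧸ symIdealQ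

/-- P = ℚ[a,b]/(a³ − 3ab, a²b − 2b², ab², b³). -/
abbrev PRing := PolyQQ ⧸ symIdealP

/-- The class of hᵢ in Q. -/
def hcl (i : Fin 2) : QRing := Ideal.Quotient.mk symIdealQ (X i)

/-- The class of a in P. -/
def acl : PRing := Ideal.Quotient.mk symIdealP (X 0)

/-- The class of b in P. -/
def bcl : PRing := Ideal.Quotient.mk symIdealP (X 1)

/-! ### Exponent bookkeeping -/

noncomputable def msig (i j : ℕ) : Fin 2 →₀ ℕ := Finsupp.single 0 i + Finsupp.single 1 j

lemma msig_eq_iff (a b c d : ℕ) : msig a b = msig c d ↔ a = c ∧ b = d := by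
  constructor
  · intro h
    constructor
    · have := DFunLike.congr_fun h 0
      simpa [msig, Finsupp.single_apply] using this
    · have := DFunLike.congr_fun h 1
      simpa [msig, Finsupp.single_apply] using this
  · rintro ⟨rfl, rfl⟩; rfl

lemma Xab (a b : ℕ) : (X 0:PolyQQ)^a * X 1^b = monomial (msig a b) 1 := by
  rw [X_pow_eq_monomial, X_pow_eq_monomial, monomial_mul, one_mul]; rfl

lemma coeff_Xab (a b c d : ℕ) :
    coeff (msig c d) ((X 0:PolyQQ)^a * X 1^b) = if a = c ∧ b = d then 1 else 0 := by
  rw [Xab, coeff_monomial]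
  rcases Classical.em (a = c ∧ b = d) with h|h
  · rw [if_pos ((msig_eq_iff a b c d).mpr h), if_pos h]
  · rw [if_neg (fun hh => h ((msig_eq_iff a b c d).mp hh)), if_neg h]

lemma coeff_mul_X0cube (p : PolyQQ) (c d : ℕ) (hc : c < 3) :
    coeff (msig c d) (p * X 0 ^ 3) = 0 := by
  rw [X_pow_eq_monomial, coeff_mul_monomial']
  rw [if_neg]
  intro h
  have := h 0
  simp [msig, Finsupp.single_apply] at this
  omega

lemma coeff_mul_X1cube (p : PolyQQ) (c d : ℕ) (hd : d < 3) :
    coeff (msig c d) (p * X 1 ^ 3) = 0 := by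
  rw [X_pow_eq_monomial, coeff_mul_monomial']
  rw [if_neg]
  intro h
  have := h 1
  simp [msig, Finsupp.single_apply] at this
  omega

/-! ### The map φ -/

def gQ : Fin 2 → PolyQQ := ![X 0 + X 1, X 0 * X 1]

def FQ : PolyQQ →ₐ[ℚ] QRing :=
  (Ideal.Quotient.mkₐ ℚ symIdealQ).comp (aeval gQ)

lemma aeval_gQ_mem {p : PolyQQ} (hp : p ∈ symIdealP) : aeval gQ p ∈ symIdealQ := by
  rw [symIdealP] at hp
  induction hp using Submodule.span_induction with
  | mem q hq =>
    simp only [Set.mem_insert_iff, Set.mem_singleton_iff] at hq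
    rw [symIdealQ, Ideal.mem_span_pair]
    rcases hq with rfl | rfl | rfl | rfl
    · exact ⟨1, 1, by
        simp only [map_sub, map_mul, map_pow, map_add, map_ofNat, aeval_X, gQ,
          Matrix.cons_val_zero, Matrix.cons_val_one, Matrix.head_cons]; ring⟩
    · exact ⟨X 1, X 0, by
        simp only [map_sub, map_mul, map_pow, map_add, map_ofNat, aeval_X, gQ,
          Matrix.cons_val_zero, Matrix.cons_val_one, Matrix.head_cons]; ring⟩
    · exact ⟨X 1 ^ 2, X 0 ^ 2, by
        simp only [map_sub, map_mul, map_pow, map_add, map_ofNat, aeval_X, gQ,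
          Matrix.cons_val_zero, Matrix.cons_val_one, Matrix.head_cons]; ring⟩
    · exact ⟨X 1 ^ 3, 0, by
        simp only [map_sub, map_mul, map_pow, map_add, map_ofNat, aeval_X, gQ,
          Matrix.cons_val_zero, Matrix.cons_val_one, Matrix.head_cons]; ring⟩
  | zero => exact Ideal.zero_mem _
  | add a b _ _ ha hb => rw [map_add]; exact Ideal.add_mem _ ha hb
  | smul c a _ ha =>
    rw [smul_eq_mul, map_mul]
    exact Ideal.mul_mem_left _ _ ha

def phi : PRing →ₐ[ℚ] QRing :=
  Ideal.Quotient.liftₐ symIdealP FQ (by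
    intro a ha
    show Ideal.Quotient.mkₐ ℚ symIdealQ (aeval gQ a) = 0
    rw [Ideal.Quotient.mkₐ_eq_mk, Ideal.Quotient.eq_zero_iff_mem]
    exact aeval_gQ_mem ha)

lemma phi_mk (p : PolyQQ) : phi (Ideal.Quotient.mk symIdealP p)
    = Ideal.Quotient.mk symIdealQ (aeval gQ p) := by
  rfl

lemma phi_acl : phi acl = hcl 0 + hcl 1 := by
  rw [acl, phi_mk]
  simp [gQ, hcl]

lemma phi_bcl : phi bcl = hcl 0 * hcl 1 := by
  rw [bcl, phi_mk]
  simp [gQ, hcl]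

/-! ### Relations in P -/

lemma relP1 : acl ^ 3 = 3 * (acl * bcl) := by
  have h : Ideal.Quotient.mk symIdealP (X 0 ^ 3) = Ideal.Quotient.mk symIdealP (3 * (X 0 * X 1)) :=
    Ideal.Quotient.eq.mpr (Ideal.subset_span (by simp))
  have h2 : acl ^ 3 = Ideal.Quotient.mk symIdealP (X 0 ^ 3) := by rw [acl, map_pow]
  rw [h2, h, map_mul, map_mul, map_ofNat, acl, bcl]

lemma relP2 : acl ^ 2 * bcl = 2 * bcl ^ 2 := by
  have h : Ideal.Quotient.mk symIdealP (X 0 ^ 2 * X 1)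
      = Ideal.Quotient.mk symIdealP (2 * X 1 ^ 2) :=
    Ideal.Quotient.eq.mpr (Ideal.subset_span (by simp))
  have h2 : acl ^ 2 * bcl = Ideal.Quotient.mk symIdealP (X 0 ^ 2 * X 1) := by
    rw [acl, bcl, map_mul, map_pow]
  rw [h2, h, map_mul, map_pow, map_ofNat, bcl]

lemma relP3 : acl * bcl ^ 2 = 0 := by
  have h : Ideal.Quotient.mk symIdealP (X 0 * X 1 ^ 2) = 0 :=
    Ideal.Quotient.eq_zero_iff_mem.mpr (Ideal.subset_span (by simp))
  rw [acl, bcl, ← map_pow, ← map_mul, h]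

lemma relP4 : bcl ^ 3 = 0 := by
  have h : Ideal.Quotient.mk symIdealP (X 1 ^ 3) = 0 :=
    Ideal.Quotient.eq_zero_iff_mem.mpr (Ideal.subset_span (by simp))
  rw [bcl, ← map_pow, h]

/-! ### Spanning of P -/

def vP : Fin 6 → PRing := ![1, acl, bcl, acl^2, acl*bcl, bcl^2]

def MP : Submodule ℚ PRing := Submodule.span ℚ (Set.range vP)

lemma vP_mem (i : Fin 6) : vP i ∈ MP := Submodule.subset_span ⟨i, rfl⟩

lemma three_mul_mem {x : PRing} (h : x ∈ MP) : 3 * x ∈ MP := by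
  have : (3:PRing) * x = x + x + x := by ring
  rw [this]; exact MP.add_mem (MP.add_mem h h) h

lemma two_mul_mem {x : PRing} (h : x ∈ MP) : 2 * x ∈ MP := by
  have : (2:PRing) * x = x + x := by ring
  rw [this]; exact MP.add_mem h h

lemma MP_mul_acl : ∀ x ∈ MP, x * acl ∈ MP := by
  intro x hx
  induction hx using Submodule.span_induction with
  | mem y hy =>
    obtain ⟨i, rfl⟩ := hy
    fin_cases i
    · simpa [vP] using vP_mem 1
    · simpa [vP, pow_two] using vP_mem 3
    · simpa [vP, mul_comm] using vP_mem 4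
    · show acl ^ 2 * acl ∈ MP
      have h : acl ^ 2 * acl = 3 * (acl * bcl) := by rw [← pow_succ, relP1]
      rw [h]
      exact three_mul_mem (by simpa [vP] using vP_mem 4)
    · show acl * bcl * acl ∈ MP
      have h : acl * bcl * acl = 2 * bcl ^ 2 := by rw [← relP2]; ring
      rw [h]
      exact two_mul_mem (by simpa [vP] using vP_mem 5)
    · show bcl ^ 2 * acl ∈ MP
      have h : bcl ^ 2 * acl = 0 := by rw [← relP3]; ring
      rw [h]; exact MP.zero_mem
  | zero => simpa using MP.zero_mem
  | add a b _ _ ha hb => simpa [add_mul] using MP.add_mem ha hb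
  | smul c a _ ha => simpa [smul_mul_assoc] using MP.smul_mem c ha

lemma MP_mul_bcl : ∀ x ∈ MP, x * bcl ∈ MP := by
  intro x hx
  induction hx using Submodule.span_induction with
  | mem y hy =>
    obtain ⟨i, rfl⟩ := hy
    fin_cases i
    · simpa [vP] using vP_mem 2
    · simpa [vP] using vP_mem 4
    · simpa [vP, pow_two] using vP_mem 5
    · show acl ^ 2 * bcl ∈ MP
      rw [relP2]
      exact two_mul_mem (by simpa [vP] using vP_mem 5)
    · show acl * bcl * bcl ∈ MP
      have h : acl * bcl * bcl = 0 := by rw [← relP3]; ring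
      rw [h]; exact MP.zero_mem
    · show bcl ^ 2 * bcl ∈ MP
      have h : bcl ^ 2 * bcl = 0 := by rw [← relP4]; ring
      rw [h]; exact MP.zero_mem
  | zero => simpa using MP.zero_mem
  | add a b _ _ ha hb => simpa [add_mul] using MP.add_mem ha hb
  | smul c a _ ha => simpa [smul_mul_assoc] using MP.smul_mem c ha

lemma memMP (x : PRing) : x ∈ MP := by
  obtain ⟨p, rfl⟩ := Ideal.Quotient.mk_surjective x
  induction p using MvPolynomial.induction_on with
  | C a =>
    have h : (C a : PolyQQ) = a • 1 := by rw [smul_eq_C_mul, mul_one]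
    rw [h, ← Ideal.Quotient.mkₐ_eq_mk ℚ, map_smul, map_one]
    exact MP.smul_mem a (by simpa [vP] using vP_mem 0)
  | add p q hp hq => rw [map_add]; exact MP.add_mem hp hq
  | mul_X p i hp =>
    rw [map_mul]
    fin_cases i
    · exact MP_mul_acl _ hp
    · exact MP_mul_bcl _ hp

/-! ### Spanning of Q -/

def eQ (i j : ℕ) : QRing := Ideal.Quotient.mk symIdealQ (X 0 ^ i * X 1 ^ j)

def NQ : Submodule ℚ QRing := Submodule.span ℚ (Set.range fun p : ℕ × ℕ => eQ p.1 p.2)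

lemma eQ_mem (i j : ℕ) : eQ i j ∈ NQ := Submodule.subset_span ⟨(i, j), rfl⟩

lemma eQ_mul_h0 (i j : ℕ) : eQ i j * hcl 0 = eQ (i+1) j := by
  rw [eQ, eQ, hcl, ← map_mul]
  congr 1
  ring

lemma eQ_mul_h1 (i j : ℕ) : eQ i j * hcl 1 = eQ i (j+1) := by
  rw [eQ, eQ, hcl, ← map_mul]
  congr 1
  ring

lemma NQ_mul_h (i : Fin 2) : ∀ x ∈ NQ, x * hcl i ∈ NQ := by
  intro x hx
  induction hx using Submodule.span_induction with
  | mem y hy =>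
    obtain ⟨⟨a, b⟩, rfl⟩ := hy
    fin_cases i
    · show eQ a b * hcl 0 ∈ NQ
      rw [eQ_mul_h0]; exact eQ_mem _ _
    · show eQ a b * hcl 1 ∈ NQ
      rw [eQ_mul_h1]; exact eQ_mem _ _
  | zero => simpa using NQ.zero_mem
  | add a b _ _ ha hb => simpa [add_mul] using NQ.add_mem ha hb
  | smul c a _ ha => simpa [smul_mul_assoc] using NQ.smul_mem c ha

lemma memNQ (x : QRing) : x ∈ NQ := by
  obtain ⟨p, rfl⟩ := Ideal.Quotient.mk_surjective x
  induction p using MvPolynomial.induction_on with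
  | C a =>
    have h : (C a : PolyQQ) = a • 1 := by rw [smul_eq_C_mul, mul_one]
    rw [h, ← Ideal.Quotient.mkₐ_eq_mk ℚ, map_smul, map_one]
    refine NQ.smul_mem a ?_
    have : (1 : QRing) = eQ 0 0 := by rw [eQ]; norm_num
    rw [this]; exact eQ_mem 0 0
  | add p q hp hq => rw [map_add]; exact NQ.add_mem hp hq
  | mul_X p i hp =>
    rw [map_mul]
    exact NQ_mul_h i _ hp

lemma eQ_zero_left {i : ℕ} (j : ℕ) (h : 3 ≤ i) : eQ i j = 0 := by
  obtain ⟨k, rfl⟩ := Nat.exists_eq_add_of_le h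
  rw [eQ, Ideal.Quotient.eq_zero_iff_mem]
  have : (X 0 : PolyQQ) ^ (3 + k) * X 1 ^ j = (X 0 ^ k * X 1 ^ j) * X 0 ^ 3 := by ring
  rw [this]
  exact Ideal.mul_mem_left _ _ (Ideal.subset_span (by simp))

lemma eQ_zero_right {j : ℕ} (i : ℕ) (h : 3 ≤ j) : eQ i j = 0 := by
  obtain ⟨k, rfl⟩ := Nat.exists_eq_add_of_le h
  rw [eQ, Ideal.Quotient.eq_zero_iff_mem]
  have : (X 0 : PolyQQ) ^ i * X 1 ^ (3 + k) = (X 0 ^ i * X 1 ^ k) * X 1 ^ 3 := by ring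
  rw [this]
  exact Ideal.mul_mem_left _ _ (Ideal.subset_span (by simp))

lemma eQ_sym_mem (i j : ℕ) : eQ i j + eQ j i ∈ phi.range := by
  by_cases hi : 3 ≤ i
  · rw [eQ_zero_left j hi, eQ_zero_right j hi]
    simpa using phi.range.zero_mem
  by_cases hj : 3 ≤ j
  · rw [eQ_zero_right i hj, eQ_zero_left i hj]
    simpa using phi.range.zero_mem
  push_neg at hi hj
  have key : ∀ p : PolyQQ,
      aeval gQ p = X 0 ^ i * X 1 ^ j + X 0 ^ j * X 1 ^ i →
      eQ i j + eQ j i ∈ phi.range := by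
    intro p hp
    refine ⟨Ideal.Quotient.mk symIdealP p, ?_⟩
    show phi (Ideal.Quotient.mk symIdealP p) = eQ i j + eQ j i
    rw [phi_mk, hp, eQ, eQ, ← map_add]
  interval_cases i <;> interval_cases j
  · exact key 2 (by simp [gQ, map_ofNat]; try ring)
  · exact key (X 0) (by simp [gQ, map_ofNat]; try ring)
  · exact key (X 0 ^ 2 - 2 * X 1) (by simp [gQ, map_ofNat]; try ring)
  · exact key (X 0) (by simp [gQ, map_ofNat]; try ring)
  · exact key (2 * X 1) (by simp [gQ, map_ofNat]; try ring)
  · exact key (X 0 * X 1) (by simp [gQ, map_ofNat]; try ring)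
  · exact key (X 0 ^ 2 - 2 * X 1) (by simp [gQ, map_ofNat]; try ring)
  · exact key (X 0 * X 1) (by simp [gQ, map_ofNat]; try ring)
  · exact key (2 * X 1 ^ 2) (by simp [gQ, map_ofNat]; try ring)

/-! ### Linear independence of the images -/

def Wp : Fin 6 → PolyQQ :=
  ![1, X 0 + X 1, X 0 * X 1, (X 0 + X 1)^2, (X 0 + X 1) * (X 0 * X 1), (X 0 * X 1)^2]

lemma indep (c : Fin 6 → ℚ) (h : (∑ i, c i • Wp i) ∈ symIdealQ) : ∀ i, c i = 0 := by
  have hZ : (∑ i, c i • Wp i) =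
      C (c 0) * (X 0^0 * X 1^0) + C (c 1) * (X 0^1 * X 1^0) + C (c 1) * (X 0^0 * X 1^1)
      + C (c 2) * (X 0^1 * X 1^1) + C (c 3) * (X 0^2 * X 1^0) + C (c 3) * (X 0^1 * X 1^1)
      + C (c 3) * (X 0^1 * X 1^1) + C (c 3) * (X 0^0 * X 1^2) + C (c 4) * (X 0^2 * X 1^1)
      + C (c 4) * (X 0^1 * X 1^2) + C (c 5) * (X 0^2 * X 1^2) := by
    rw [Fin.sum_univ_six]
    show c 0 • (1:PolyQQ) + c 1 • (X 0 + X 1) + c 2 • (X 0 * X 1) + c 3 • ((X 0 + X 1)^2)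
      + c 4 • ((X 0 + X 1) * (X 0 * X 1)) + c 5 • ((X 0 * X 1)^2) = _
    simp only [smul_eq_C_mul]
    ring
  rw [symIdealQ, Ideal.mem_span_pair] at h
  obtain ⟨p, q, hpq⟩ := h
  have key : ∀ a b : ℕ, a < 3 → b < 3 → coeff (msig a b) (∑ i, c i • Wp i) = 0 := by
    intro a b ha hb
    rw [← hpq, coeff_add, coeff_mul_X0cube _ _ _ ha, coeff_mul_X1cube _ _ _ hb, add_zero]
  rw [hZ] at key
  have h00 := key 0 0 (by norm_num) (by norm_num)
  have h10 := key 1 0 (by norm_num) (by norm_num)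
  have h11 := key 1 1 (by norm_num) (by norm_num)
  have h20 := key 2 0 (by norm_num) (by norm_num)
  have h21 := key 2 1 (by norm_num) (by norm_num)
  have h22 := key 2 2 (by norm_num) (by norm_num)
  simp only [coeff_add, coeff_C_mul, coeff_Xab] at h00 h10 h11 h20 h21 h22
  norm_num at h00 h10 h11 h20 h21 h22
  intro i
  fin_cases i
  · exact h00
  · exact h10
  · show c 2 = 0
    linarith
  · exact h20
  · exact h21
  · exact h22

lemma phi_vP (i : Fin 6) :
    phi (vP i) = Ideal.Quotient.mk symIdealQ (Wp i) := by
  fin_cases i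
  · show phi 1 = Ideal.Quotient.mk symIdealQ 1
    simp
  · show phi acl = Ideal.Quotient.mk symIdealQ (X 0 + X 1)
    rw [phi_acl, hcl, hcl, map_add]
  · show phi bcl = Ideal.Quotient.mk symIdealQ (X 0 * X 1)
    rw [phi_bcl, hcl, hcl, map_mul]
  · show phi (acl^2) = Ideal.Quotient.mk symIdealQ ((X 0 + X 1)^2)
    rw [map_pow, phi_acl, hcl, hcl, map_pow, map_add]
  · show phi (acl*bcl) = Ideal.Quotient.mk symIdealQ ((X 0 + X 1) * (X 0 * X 1))
    rw [map_mul, phi_acl, phi_bcl, hcl, hcl, map_mul, map_add, map_mul]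
  · show phi (bcl^2) = Ideal.Quotient.mk symIdealQ ((X 0 * X 1)^2)
    rw [map_pow, phi_bcl, hcl, hcl, map_pow, map_mul]

lemma phi_inj : Function.Injective phi := by
  rw [injective_iff_map_eq_zero]
  intro x hx
  have hxM := memMP x
  rw [MP, Submodule.mem_span_range_iff_exists_fun] at hxM
  obtain ⟨c, hc⟩ := hxM
  have himg : phi x = Ideal.Quotient.mkₐ ℚ symIdealQ (∑ i, c i • Wp i) := by
    rw [← hc, map_sum, map_sum]
    congr 1
    funext i
    rw [map_smul, map_smul, phi_vP, Ideal.Quotient.mkₐ_eq_mk]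
  rw [hx] at himg
  have hmem : (∑ i, c i • Wp i) ∈ symIdealQ := by
    rw [← Ideal.Quotient.eq_zero_iff_mem, ← Ideal.Quotient.mkₐ_eq_mk ℚ, ← himg]
  have hc0 := indep c hmem
  rw [← hc]
  simp [hc0]

/-! ### The swap automorphism -/

def swapA : PolyQQ ≃ₐ[ℚ] PolyQQ := renameEquiv ℚ (Equiv.swap 0 1)

lemma swap_ideal : symIdealQ = Ideal.map (swapA : PolyQQ →+* PolyQQ) symIdealQ := by
  rw [symIdealQ, Ideal.map_span, Set.image_pair]
  have h0 : (swapA : PolyQQ →+* PolyQQ) (X 0 ^ 3) = X 1 ^ 3 := by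
    simp [swapA, map_pow, rename_X]
  have h1 : (swapA : PolyQQ →+* PolyQQ) (X 1 ^ 3) = X 0 ^ 3 := by
    simp [swapA, map_pow, rename_X]
  rw [h0, h1, Set.pair_comm]

def sigma0 : QRing ≃ₐ[ℚ] QRing :=
  Ideal.quotientEquivAlg symIdealQ symIdealQ swapA swap_ideal

lemma sigma0_01 : sigma0 (hcl 0) = hcl 1 := by
  have h : sigma0 (hcl 0) = Ideal.Quotient.mk symIdealQ (swapA (X 0)) := rfl
  rw [h, hcl]
  congr 1
  simp [swapA, rename_X]

lemma sigma0_10 : sigma0 (hcl 1) = hcl 0 := by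
  have h : sigma0 (hcl 1) = Ideal.Quotient.mk symIdealQ (swapA (X 1)) := rfl
  rw [h, hcl]
  congr 1
  simp [swapA, rename_X]

/-! ### Range characterization -/

section Sigma

variable (σ : QRing ≃ₐ[ℚ] QRing) (hσ0 : σ (hcl 0) = hcl 1) (hσ1 : σ (hcl 1) = hcl 0)

include hσ0 hσ1

lemma sigma_fixes_phi (x : PRing) : σ (phi x) = phi x := by
  have hx := memMP x
  induction hx using Submodule.span_induction with
  | mem y hy =>
    obtain ⟨i, rfl⟩ := hy
    rw [phi_vP]
    fin_cases i
    · show σ (Ideal.Quotient.mk symIdealQ 1) = Ideal.Quotient.mk symIdealQ 1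
      simp
    · show σ (Ideal.Quotient.mk symIdealQ (X 0 + X 1))
          = Ideal.Quotient.mk symIdealQ (X 0 + X 1)
      have h : Ideal.Quotient.mk symIdealQ (X 0 + X 1) = hcl 0 + hcl 1 := by
        rw [hcl, hcl, map_add]
      rw [h, map_add, hσ0, hσ1, add_comm]
    · show σ (Ideal.Quotient.mk symIdealQ (X 0 * X 1))
          = Ideal.Quotient.mk symIdealQ (X 0 * X 1)
      have h : Ideal.Quotient.mk symIdealQ (X 0 * X 1) = hcl 0 * hcl 1 := by
        rw [hcl, hcl, map_mul]
      rw [h, map_mul, hσ0, hσ1, mul_comm]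
    · show σ (Ideal.Quotient.mk symIdealQ ((X 0 + X 1)^2))
          = Ideal.Quotient.mk symIdealQ ((X 0 + X 1)^2)
      have h : Ideal.Quotient.mk symIdealQ ((X 0 + X 1)^2) = (hcl 0 + hcl 1)^2 := by
        rw [hcl, hcl, map_pow, map_add]
      rw [h, map_pow, map_add, hσ0, hσ1, add_comm]
    · show σ (Ideal.Quotient.mk symIdealQ ((X 0 + X 1) * (X 0 * X 1)))
          = Ideal.Quotient.mk symIdealQ ((X 0 + X 1) * (X 0 * X 1))
      have h : Ideal.Quotient.mk symIdealQ ((X 0 + X 1) * (X 0 * X 1))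
          = (hcl 0 + hcl 1) * (hcl 0 * hcl 1) := by
        rw [hcl, hcl, map_mul, map_add, map_mul]
      rw [h, map_mul, map_add, map_mul, hσ0, hσ1]
      ring
    · show σ (Ideal.Quotient.mk symIdealQ ((X 0 * X 1)^2))
          = Ideal.Quotient.mk symIdealQ ((X 0 * X 1)^2)
      have h : Ideal.Quotient.mk symIdealQ ((X 0 * X 1)^2) = (hcl 0 * hcl 1)^2 := by
        rw [hcl, hcl, map_pow, map_mul]
      rw [h, map_pow, map_mul, hσ0, hσ1, mul_comm]
  | zero => simp
  | add a b _ _ ha hb => rw [map_add, map_add, ha, hb]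
  | smul c a _ ha => rw [map_smul, map_smul, ha]

lemma sigma_eQ (i j : ℕ) : σ (eQ i j) = eQ j i := by
  have h : eQ i j = hcl 0 ^ i * hcl 1 ^ j := by
    rw [eQ, hcl, hcl, map_mul, map_pow, map_pow]
  have h' : eQ j i = hcl 0 ^ j * hcl 1 ^ i := by
    rw [eQ, hcl, hcl, map_mul, map_pow, map_pow]
  rw [h, h', map_mul, map_pow, map_pow, hσ0, hσ1]
  ring

lemma fixed_mem_range {x : QRing} (hx : σ x = x) : x ∈ phi.range := by
  have key : ∀ y ∈ NQ, y + σ y ∈ phi.range := by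
    intro y hy
    induction hy using Submodule.span_induction with
    | mem z hz =>
      obtain ⟨⟨a, b⟩, rfl⟩ := hz
      show eQ a b + σ (eQ a b) ∈ phi.range
      rw [sigma_eQ σ hσ0 hσ1]
      exact eQ_sym_mem a b
    | zero => simpa using phi.range.zero_mem
    | add a b _ _ ha hb =>
      have : a + b + σ (a + b) = (a + σ a) + (b + σ b) := by rw [map_add]; ring
      rw [this]; exact phi.range.add_mem ha hb
    | smul c a _ ha =>
      have : c • a + σ (c • a) = c • (a + σ a) := by rw [map_smul, smul_add]
      rw [this]
      exact phi.range.smul_mem ha c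
  have h2 : x + σ x ∈ phi.range := key x (memNQ x)
  rw [hx] at h2
  have h3 : x = (2⁻¹ : ℚ) • (x + x) := by
    rw [← two_smul ℚ x, smul_smul]
    norm_num
  rw [h3]
  exact phi.range.smul_mem h2 _

end Sigma

/-- There is a ℚ-algebra automorphism σ of Q exchanging h₁ and h₂, and for it
(it is unique, being determined on the generators) the assignment
a ↦ h₁ + h₂, b ↦ h₁h₂ induces an injective ℚ-algebra homomorphism φ : P → Q whose
image is exactly the set of σ-fixed elements of Q. -/
theorem sym2P2_chow_ring_invariants :
    (∃ σ : QRing ≃ₐ[ℚ] QRing, σ (hcl 0) = hcl 1 ∧ σ (hcl 1) = hcl 0) ∧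
    ∀ σ : QRing ≃ₐ[ℚ] QRing, σ (hcl 0) = hcl 1 → σ (hcl 1) = hcl 0 →
      ∃ φ : PRing →ₐ[ℚ] QRing,
        φ acl = hcl 0 + hcl 1 ∧
        φ bcl = hcl 0 * hcl 1 ∧
        Function.Injective φ ∧
        (φ.range : Set QRing) = {x : QRing | σ x = x} := by
  constructor
  · exact ⟨sigma0, sigma0_01, sigma0_10⟩
  · intro σ hσ0 hσ1
    refine ⟨phi, phi_acl, phi_bcl, phi_inj, ?_⟩
    ext x
    constructor
    · rintro ⟨y, rfl⟩
      exact sigma_fixes_phi σ hσ0 hσ1 y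
    · intro hx
      exact fixed_mem_range σ hσ0 hσ1 hx
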